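/- Let R be a random vector in ℝⁿ with finitely many outcomes, and let F_λ(w) = −λ₁ M^T w + λ₂ E[⟨R,w⟩²] − λ₃ E[⟨R,w⟩³] + λ₄ E[⟨R,w⟩⁴]. Let C ⊆ ℝⁿ be convex. If Φ_λ(R,w) := 6λ₄⟨R,w⟩² − 3λ₃⟨R,w⟩ + λ₂ ≥ 0 for every outcome of R and every w ∈ C, then F_λ is convex on C. -/

import Mathlib

open Matrix

private lemma my_convexOn_sum {E : Type*} [AddCommGroup E] [Module ℝ E]
    {s : Set E} (hs : Convex ℝ s) {ι : Type*} (t : Finset ι) (f : ι → E → ℝ)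
    (h : ∀ i ∈ t, ConvexOn ℝ s (f i)) :
    ConvexOn ℝ s (fun x => ∑ i ∈ t, f i x) := by
  classical
  induction t using Finset.induction_on with
  | empty => simpa using convexOn_const 0 hs
  | @insert a s hnot ih =>
    simp only [Finset.sum_insert hnot]
    exact (h _ (Finset.mem_insert_self _ _)).add
      (ih fun i hi => h i (Finset.mem_insert_of_mem hi))

private lemma my_quartic_convexOn (l2 l3 l4 : ℝ) {D : Set ℝ} (hD : Convex ℝ D)
    (h : ∀ t ∈ D, 0 ≤ 6 * l4 * t ^ 2 - 3 * l3 * t + l2) :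
    ConvexOn ℝ D (fun t => l2 * t ^ 2 - l3 * t ^ 3 + l4 * t ^ 4) := by
  apply convexOn_of_hasDerivWithinAt2_nonneg hD
    (f' := fun t => 2 * l2 * t - 3 * l3 * t ^ 2 + 4 * l4 * t ^ 3)
    (f'' := fun t => 2 * l2 - 6 * l3 * t + 12 * l4 * t ^ 2)
  · fun_prop
  · intro x hx
    have H : HasDerivAt (fun t : ℝ => l2 * t ^ 2 - l3 * t ^ 3 + l4 * t ^ 4)
        (2 * l2 * x - 3 * l3 * x ^ 2 + 4 * l4 * x ^ 3) x := by
      have := (((hasDerivAt_pow 2 x).const_mul l2).sub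
        ((hasDerivAt_pow 3 x).const_mul l3)).add ((hasDerivAt_pow 4 x).const_mul l4)
      refine this.congr_deriv ?_
      push_cast; ring
    exact H.hasDerivWithinAt
  · intro x hx
    have H : HasDerivAt (fun t : ℝ => 2 * l2 * t - 3 * l3 * t ^ 2 + 4 * l4 * t ^ 3)
        (2 * l2 - 6 * l3 * x + 12 * l4 * x ^ 2) x := by
      have := (((hasDerivAt_pow 1 x).const_mul (2 * l2)).sub
        ((hasDerivAt_pow 2 x).const_mul (3 * l3))).add
        ((hasDerivAt_pow 3 x).const_mul (4 * l4))
      refine (this.congr_deriv ?_).congr_of_eventuallyEq (Filter.Eventually.of_forall fun t => ?_)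
      · norm_num; ring
      · simp only [Pi.add_apply, Pi.sub_apply]; ring
    exact H.hasDerivWithinAt
  · intro x hx
    have := h x (interior_subset hx)
    nlinarith

private def my_dpLin {n : ℕ} (r : Fin n → ℝ) : (Fin n → ℝ) →ₗ[ℝ] ℝ where
  toFun w := r ⬝ᵥ w
  map_add' x y := by simp [dotProduct, mul_add, Finset.sum_add_distrib]
  map_smul' c x := by
    simp [dotProduct, Finset.mul_sum, mul_comm, mul_left_comm]

open Matrix in
theorem scalarized_MVSK_convex_of_Phi_nonneg
    {n m : ℕ} (p : Fin m → ℝ) (hp : ∀ k, 0 ≤ p k) (hp1 : ∑ k, p k = 1)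
    (R : Fin m → (Fin n → ℝ)) (M : Fin n → ℝ) (l1 l2 l3 l4 : ℝ)
    (C : Set (Fin n → ℝ)) (hC : Convex ℝ C)
    (hPhi : ∀ k, ∀ w ∈ C, 0 ≤ 6 * l4 * (R k ⬝ᵥ w) ^ 2 - 3 * l3 * (R k ⬝ᵥ w) + l2) :
    ConvexOn ℝ C (fun w => -l1 * (M ⬝ᵥ w) + l2 * ∑ k, p k * (R k ⬝ᵥ w) ^ 2
      - l3 * ∑ k, p k * (R k ⬝ᵥ w) ^ 3 + l4 * ∑ k, p k * (R k ⬝ᵥ w) ^ 4) := by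
  -- linear part
  have hlin : ConvexOn ℝ C (fun w => -l1 * (M ⬝ᵥ w)) := by
    have := ((-l1) • my_dpLin M).convexOn hC
    exact this.congr fun w _ => rfl
  -- convexity of each quartic term composed with the linear map
  have hterm : ∀ k : Fin m, ConvexOn ℝ C
      (fun w => p k * (l2 * (R k ⬝ᵥ w) ^ 2 - l3 * (R k ⬝ᵥ w) ^ 3 + l4 * (R k ⬝ᵥ w) ^ 4)) := by
    intro k
    have hD : Convex ℝ ((fun w => R k ⬝ᵥ w) '' C) :=
      hC.is_linear_image (my_dpLin (R k)).isLinear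
    have hg : ConvexOn ℝ ((fun w => R k ⬝ᵥ w) '' C)
        (fun t => l2 * t ^ 2 - l3 * t ^ 3 + l4 * t ^ 4) := by
      apply my_quartic_convexOn l2 l3 l4 hD
      rintro t ⟨w, hw, rfl⟩
      exact hPhi k w hw
    have hcomp := hg.comp_affineMap (my_dpLin (R k)).toAffineMap
    have hsub : ConvexOn ℝ C
        ((fun t => l2 * t ^ 2 - l3 * t ^ 3 + l4 * t ^ 4) ∘ (my_dpLin (R k)).toAffineMap) :=
      hcomp.subset (fun w hw => Set.mem_preimage.2 ⟨w, hw, rfl⟩) hC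
    have := hsub.smul (hp k)
    exact this.congr fun w _ => rfl
  have hsum : ConvexOn ℝ C (fun w => ∑ k,
      p k * (l2 * (R k ⬝ᵥ w) ^ 2 - l3 * (R k ⬝ᵥ w) ^ 3 + l4 * (R k ⬝ᵥ w) ^ 4)) :=
    my_convexOn_sum hC Finset.univ _ (fun k _ => hterm k)
  have hsum' : ConvexOn ℝ C (fun w => l2 * ∑ k, p k * (R k ⬝ᵥ w) ^ 2
      - l3 * ∑ k, p k * (R k ⬝ᵥ w) ^ 3 + l4 * ∑ k, p k * (R k ⬝ᵥ w) ^ 4) := by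
    convert hsum using 1
    funext w
    rw [Finset.mul_sum, Finset.mul_sum, Finset.mul_sum, ← Finset.sum_sub_distrib,
      ← Finset.sum_add_distrib]
    exact Finset.sum_congr rfl fun k _ => by ring
  have := hlin.add hsum'
  refine this.congr fun w _ => ?_
  simp only [Pi.add_apply]
  ring
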